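/- For the tropical 2-soliton solution with 0 < p_1 < p_2: on the boundary line x = x_{\bar1\bar1,11}(t) = −(p_1² − p_1 p_2 + p_2²) t (where Θ_{\bar1\bar1} = Θ_{11}), one has Θ_{11} − Θ_{1\bar1} = 2 p_1 p_2 (p_2−p_1) t − ℓ and Θ_{11} − Θ_{\bar11} = −2 p_1 p_2 (p_2−p_1) t − ℓ. Consequently, at every point of this line at least one of Θ_{1\bar1}, Θ_{\bar11} strictly exceeds Θ_{11}, i.e., the entire line is non-visible. -/

import Mathlib

/-!
On the line `x = -(p₁² - p₁p₂ + p₂²) t` one has `θ₁ + θ₂ = 0`, because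
`p₁³ + p₂³ = (p₁ + p₂)(p₁² - p₁p₂ + p₂²)`; this is why `Θ_{1̄1̄} = Θ_{11}` there.
Moreover `Θ_{11} - Θ_{11̄} = 2θ₂ - ℓ` and `Θ_{11} - Θ_{1̄1} = 2θ₁ - ℓ` everywhere.
As `θ₁ = -θ₂` on the line, one of `θ₁, θ₂` is `≤ 0`, and `ℓ > 0` makes the
corresponding difference negative.
-/

open Real

noncomputable def θ (p x t : ℝ) : ℝ := p * (x + p^2 * t)

noncomputable def Θmm (p₁ p₂ x t : ℝ) : ℝ := -θ p₁ x t - θ p₂ x t + Real.log (p₂ - p₁)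
noncomputable def Θpm (p₁ p₂ x t : ℝ) : ℝ := θ p₁ x t - θ p₂ x t + Real.log (p₁ + p₂)
noncomputable def Θmp (p₁ p₂ x t : ℝ) : ℝ := -θ p₁ x t + θ p₂ x t + Real.log (p₁ + p₂)
noncomputable def Θpp (p₁ p₂ x t : ℝ) : ℝ := θ p₁ x t + θ p₂ x t + Real.log (p₂ - p₁)

noncomputable def ℓ (p₁ p₂ : ℝ) : ℝ := Real.log ((p₂ + p₁) / (p₂ - p₁))

section Phases

variable (p₁ p₂ x t : ℝ)

theorem Θpp_sub_Θmm : Θpp p₁ p₂ x t - Θmm p₁ p₂ x t = 2 * (θ p₁ x t + θ p₂ x t) := by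
  simp only [Θpp, Θmm]; ring

variable {p₁ p₂}

theorem ℓ_eq_log_sub_log (hsum : p₂ + p₁ ≠ 0) (hdiff : p₂ - p₁ ≠ 0) :
    ℓ p₁ p₂ = Real.log (p₁ + p₂) - Real.log (p₂ - p₁) := by
  rw [ℓ, Real.log_div hsum hdiff, add_comm p₂ p₁]

theorem Θpp_sub_Θpm (hsum : p₂ + p₁ ≠ 0) (hdiff : p₂ - p₁ ≠ 0) :
    Θpp p₁ p₂ x t - Θpm p₁ p₂ x t = 2 * θ p₂ x t - ℓ p₁ p₂ := by
  rw [ℓ_eq_log_sub_log hsum hdiff, Θpp, Θpm]; ring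

theorem Θpp_sub_Θmp (hsum : p₂ + p₁ ≠ 0) (hdiff : p₂ - p₁ ≠ 0) :
    Θpp p₁ p₂ x t - Θmp p₁ p₂ x t = 2 * θ p₁ x t - ℓ p₁ p₂ := by
  rw [ℓ_eq_log_sub_log hsum hdiff, Θpp, Θmp]; ring

theorem ℓ_pos (h1 : 0 < p₁) (h12 : p₁ < p₂) : 0 < ℓ p₁ p₂ :=
  Real.log_pos <| (one_lt_div (by linarith)).2 (by linarith)

end Phases

section BoundaryLine

variable (p₁ p₂ t : ℝ)

theorem θ_left_on_boundary :
    θ p₁ (-(p₁^2 - p₁*p₂ + p₂^2) * t) t = -(p₁ * p₂ * (p₂ - p₁) * t) := by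
  rw [θ]; ring

theorem θ_right_on_boundary :
    θ p₂ (-(p₁^2 - p₁*p₂ + p₂^2) * t) t = p₁ * p₂ * (p₂ - p₁) * t := by
  rw [θ]; ring

theorem θ_add_θ_on_boundary :
    θ p₁ (-(p₁^2 - p₁*p₂ + p₂^2) * t) t + θ p₂ (-(p₁^2 - p₁*p₂ + p₂^2) * t) t = 0 := by
  rw [θ_left_on_boundary, θ_right_on_boundary]; ring

end BoundaryLine

theorem nonvisible_line_mm_pp (p₁ p₂ : ℝ) (h1 : 0 < p₁) (h12 : p₁ < p₂) :
    ∀ t : ℝ,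
      Θmm p₁ p₂ (-(p₁^2 - p₁*p₂ + p₂^2) * t) t = Θpp p₁ p₂ (-(p₁^2 - p₁*p₂ + p₂^2) * t) t
      ∧ Θpp p₁ p₂ (-(p₁^2 - p₁*p₂ + p₂^2) * t) t
          - Θpm p₁ p₂ (-(p₁^2 - p₁*p₂ + p₂^2) * t) t
        = 2*p₁*p₂*(p₂ - p₁) * t - ℓ p₁ p₂
      ∧ Θpp p₁ p₂ (-(p₁^2 - p₁*p₂ + p₂^2) * t) t
          - Θmp p₁ p₂ (-(p₁^2 - p₁*p₂ + p₂^2) * t) t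
        = -(2*p₁*p₂*(p₂ - p₁)) * t - ℓ p₁ p₂
      ∧ (Θpp p₁ p₂ (-(p₁^2 - p₁*p₂ + p₂^2) * t) t
            < Θpm p₁ p₂ (-(p₁^2 - p₁*p₂ + p₂^2) * t) t
          ∨ Θpp p₁ p₂ (-(p₁^2 - p₁*p₂ + p₂^2) * t) t
            < Θmp p₁ p₂ (-(p₁^2 - p₁*p₂ + p₂^2) * t) t) := by
  intro t
  have hsum : p₂ + p₁ ≠ 0 := by linarith
  have hdiff : p₂ - p₁ ≠ 0 := by linarith
  set x := -(p₁^2 - p₁*p₂ + p₂^2) * t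
  have hpm := Θpp_sub_Θpm x t hsum hdiff
  have hmp := Θpp_sub_Θmp x t hsum hdiff
  have hθ := θ_add_θ_on_boundary p₁ p₂ t
  have hℓ := ℓ_pos h1 h12
  refine ⟨?_, ?_, ?_, ?_⟩
  · linarith [Θpp_sub_Θmm p₁ p₂ x t]
  · rw [hpm, θ_right_on_boundary]; ring
  · rw [hmp, θ_left_on_boundary]; ring
  · rcases le_or_gt (θ p₂ x t) 0 with hθ₂ | hθ₂
    · left; linarith
    · right; linarith
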